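/- Let k₁ > 0, ρ > 0, ℓᵢ, ℓᵢ₊₁ > 0, and let δ̄ᵢ, δ̄ᵢ₊₁ ∈ [0, π/2] satisfy tanh(k₁ℓᵢ/2) = tanh(k₁ρ)·sin(δ̄ᵢ) and tanh(k₁ℓᵢ₊₁/2) = tanh(k₁ρ)·sin(δ̄ᵢ₊₁). If κ ≥ (π/2)·k₁·coth(k₁ρ), then δ̄ᵢ + δ̄ᵢ₊₁ ≤ κ·(ℓᵢ + ℓᵢ₊₁)/2. -/
import Mathlib


noncomputable def coth (x : ℝ) : ℝ := Real.cosh x / Real.sinh x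

lemma tanh_le_self {x : ℝ} (hx : 0 ≤ x) : Real.tanh x ≤ x := by
  rw [Real.tanh_eq_sinh_div_cosh, div_le_iff₀ (Real.cosh_pos x)]
  have hmono : MonotoneOn (fun t : ℝ => t * Real.cosh t - Real.sinh t) (Set.Ici 0) := by
    apply monotoneOn_of_deriv_nonneg (convex_Ici 0)
    · exact ((continuous_id.mul Real.continuous_cosh).sub Real.continuous_sinh).continuousOn
    · intro t _
      have : HasDerivAt (fun t : ℝ => t * Real.cosh t - Real.sinh t)
          ((1 * Real.cosh t + t * Real.sinh t) - Real.cosh t) t :=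
        ((hasDerivAt_id t).mul (Real.hasDerivAt_cosh t)).sub (Real.hasDerivAt_sinh t)
      exact this.differentiableAt.differentiableWithinAt
    · intro t ht
      have hD : HasDerivAt (fun t : ℝ => t * Real.cosh t - Real.sinh t)
          ((1 * Real.cosh t + t * Real.sinh t) - Real.cosh t) t :=
        ((hasDerivAt_id t).mul (Real.hasDerivAt_cosh t)).sub (Real.hasDerivAt_sinh t)
      rw [hD.deriv]
      have ht' : 0 ≤ t := le_of_lt (by simpa using ht)
      nlinarith [mul_nonneg ht' (Real.sinh_nonneg_iff.mpr ht')]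
  have := hmono (Set.self_mem_Ici) (Set.mem_Ici.mpr hx) hx
  simp at this
  linarith

theorem angle_sum_bound (k₁ ρ ℓi ℓi1 δi δi1 κ : ℝ)
    (hk : 0 < k₁) (hρ : 0 < ρ) (hℓi : 0 < ℓi) (hℓi1 : 0 < ℓi1)
    (hδi : δi ∈ Set.Icc 0 (Real.pi / 2)) (hδi1 : δi1 ∈ Set.Icc 0 (Real.pi / 2))
    (hi : Real.tanh (k₁ * ℓi / 2) = Real.tanh (k₁ * ρ) * Real.sin δi)
    (hi1 : Real.tanh (k₁ * ℓi1 / 2) = Real.tanh (k₁ * ρ) * Real.sin δi1)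
    (hκ : κ ≥ (Real.pi / 2) * k₁ * coth (k₁ * ρ)) :
    δi + δi1 ≤ κ * (ℓi + ℓi1) / 2 := by
  have hkρ : 0 < k₁ * ρ := mul_pos hk hρ
  have hT : 0 < Real.tanh (k₁ * ρ) := by
    rw [Real.tanh_eq_sinh_div_cosh]
    exact div_pos (Real.sinh_pos_iff.mpr hkρ) (Real.cosh_pos _)
  have hcoth : coth (k₁ * ρ) = (Real.tanh (k₁ * ρ))⁻¹ := by
    rw [coth, Real.tanh_eq_sinh_div_cosh, inv_div]
  have hpi : 0 < Real.pi := Real.pi_pos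
  have key : ∀ ℓ δ, 0 < ℓ → δ ∈ Set.Icc 0 (Real.pi / 2) →
      Real.tanh (k₁ * ℓ / 2) = Real.tanh (k₁ * ρ) * Real.sin δ →
      δ ≤ (Real.pi / 2) * k₁ * coth (k₁ * ρ) * (ℓ / 2) := by
    intro ℓ δ hℓ hδ h
    obtain ⟨hδ0, hδ2⟩ := hδ
    have hsin : (2 / Real.pi) * δ ≤ Real.sin δ := Real.mul_le_sin hδ0 hδ2
    have htanh : Real.tanh (k₁ * ℓ / 2) ≤ k₁ * ℓ / 2 :=
      tanh_le_self (by positivity)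
    have hsin' : Real.sin δ = Real.tanh (k₁ * ℓ / 2) / Real.tanh (k₁ * ρ) := by
      rw [h]; field_simp
    have h1 : (2 / Real.pi) * δ ≤ (k₁ * ℓ / 2) / Real.tanh (k₁ * ρ) := by
      calc (2 / Real.pi) * δ ≤ Real.sin δ := hsin
        _ = Real.tanh (k₁ * ℓ / 2) / Real.tanh (k₁ * ρ) := hsin'
        _ ≤ (k₁ * ℓ / 2) / Real.tanh (k₁ * ρ) := by gcongr
    rw [hcoth]
    have e : Real.pi / 2 * k₁ * (Real.tanh (k₁ * ρ))⁻¹ * (ℓ / 2)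
        = (k₁ * ℓ / 2) / Real.tanh (k₁ * ρ) * Real.pi / 2 := by
      field_simp
    rw [e]
    rw [div_mul_eq_mul_div, div_le_iff₀ hpi] at h1
    linarith
  have b1 := key ℓi δi hℓi hδi hi
  have b2 := key ℓi1 δi1 hℓi1 hδi1 hi1
  have hsum : 0 ≤ (ℓi + ℓi1) / 2 := by positivity
  nlinarith [mul_nonneg (sub_nonneg.mpr hκ) hsum]
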